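/- arXiv:math/0406019 — 4 statements merged into one kernel-verified Lean document; each statement's English description precedes it below -/
import Mathlib

section
/- If a polynomial h of degree at most d is symmetric with center of symmetry d/2 (i.e., t^d · h(1/t) = h(t)), has positive leading coefficient, and has only real non-positive zeros, then h lies in the non-negative span of the polynomials t^i(1+t)^{d-2i} for 0 ≤ i ≤ ⌊d/2⌋. -/
/-!
Induction on `d`. A non-constant `h` has a real root `r ≤ 0`, and by symmetry `r⁻¹` is a
root as well. According as `r = 0`, `r = -1` or otherwise, `h` is divisible by `t`, `1 + t` or
`(t - r)(t - r⁻¹) = (1 + t)² + c t` with `c = -(r + r⁻¹) - 2 ≥ 0`. Each of these factors `p` is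
symmetric of some width `k ∈ {1, 2}` and maps `S_+^m` into `S_+^(m+k)`, while the cofactor is
again symmetric with center `(d - k)/2` (for `p = t`, symmetry also kills the coefficient of
`t^d`, so the cofactor has degree at most `d - 2`).
-/

open Polynomial

/-- `Splus d h`: `h` lies in the non-negative span of the polynomials
`t^i (1+t)^(d-2i)` for `0 ≤ i ≤ ⌊d/2⌋`. -/
def Splus (d : ℕ) (h : Polynomial ℝ) : Prop :=
  ∃ a : ℕ → ℝ, (∀ i, 0 ≤ a i) ∧
    h = ∑ i ∈ Finset.range (d / 2 + 1), C (a i) * X ^ i * (1 + X) ^ (d - 2 * i)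

namespace Polynomial

variable {R : Type*}

theorem reflect_two_X [Semiring R] : (X : R[X]).reflect 2 = X := by
  simpa using reflect_monomial (R := R) 2 1

theorem coeff_eq_coeff_zero_of_reflect_eq [Semiring R] {d : ℕ} {h : R[X]}
    (hsym : h.reflect d = h) : h.coeff d = h.coeff 0 := by
  rw [← hsym, coeff_reflect, revAt_le le_rfl, Nat.sub_self, hsym]

theorem le_natDegree_of_reflect_eq [Semiring R] {d : ℕ} {h : R[X]} (hsym : h.reflect d = h)
    (h0 : h.coeff 0 ≠ 0) : d ≤ h.natDegree :=
  le_natDegree_of_ne_zero (coeff_eq_coeff_zero_of_reflect_eq hsym ▸ h0)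

theorem reflect_eq_self_of_mul [Ring R] [NoZeroDivisors R] {k m : ℕ} {p g : R[X]} (hp0 : p ≠ 0)
    (hpk : p.natDegree ≤ k) (hgm : g.natDegree ≤ m) (hp : p.reflect k = p)
    (hpg : (p * g).reflect (k + m) = p * g) : g.reflect m = g :=
  mul_left_cancel₀ hp0 (by rw [← hpg, reflect_mul p g hpk hgm, hp])

theorem IsRoot.inv_of_reflect_eq [Field R] {d : ℕ} {h : R[X]} (hdeg : h.natDegree ≤ d)
    (hsym : h.reflect d = h) {r : R} (hr : h.IsRoot r) : h.IsRoot r⁻¹ := by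
  rcases eq_or_ne r 0 with rfl | hr0
  · simpa using hr
  · have : Invertible r := invertibleOfNonzero hr0
    have := (eval₂_reflect_eq_zero_iff (RingHom.id R) r d h hdeg).2 hr
    rwa [hsym, invOf_eq_inv] at this

theorem exists_eq_X_mul_of_isRoot_zero [Semiring R] [Nontrivial R] {d : ℕ} {h : R[X]}
    (hh : h ≠ 0) (hdeg : h.natDegree ≤ d) (hsym : h.reflect d = h) (hr : h.IsRoot 0) :
    ∃ g, h = X * g ∧ g.natDegree + 2 ≤ d := by
  have h0 : h.coeff 0 = 0 := by rwa [coeff_zero_eq_eval_zero]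
  have hne : h.natDegree ≠ d := fun hd => hh <| leadingCoeff_eq_zero.1 <| by
    rw [leadingCoeff, hd, coeff_eq_coeff_zero_of_reflect_eq hsym, h0]
  obtain ⟨g, rfl⟩ := X_dvd_iff.2 h0
  have hg : (X * g).natDegree = g.natDegree + 1 := by
    rw [monic_X.natDegree_mul' (right_ne_zero_of_mul hh), natDegree_X, add_comm]
  exact ⟨g, rfl, by omega⟩

theorem exists_eq_one_add_X_mul_of_isRoot_neg_one [CommRing R] [Nontrivial R] {d : ℕ} {h : R[X]}
    (hh : h ≠ 0) (hdeg : h.natDegree ≤ d) (hr : h.IsRoot (-1)) :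
    ∃ g, h = (1 + X) * g ∧ g.natDegree + 1 ≤ d := by
  have hX : (X - C (-1) : R[X]) = 1 + X := by rw [map_neg, C_1, sub_neg_eq_add, add_comm]
  obtain ⟨g, rfl⟩ : 1 + X ∣ h := hX ▸ dvd_iff_isRoot.2 hr
  have hg : ((1 + X) * g).natDegree = 1 + g.natDegree := by
    rw [← hX, (monic_X_sub_C _).natDegree_mul' (right_ne_zero_of_mul hh), natDegree_X_sub_C]
  exact ⟨g, rfl, by omega⟩

end Polynomial

namespace Splus

variable {d : ℕ} {g h : ℝ[X]}

theorem zero (d : ℕ) : Splus d 0 :=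
  ⟨0, fun _ => le_rfl, by simp⟩

theorem add (hh : Splus d h) (hg : Splus d g) : Splus d (h + g) := by
  obtain ⟨a, ha, rfl⟩ := hh
  obtain ⟨b, hb, rfl⟩ := hg
  refine ⟨a + b, fun i => add_nonneg (ha i) (hb i), ?_⟩
  simp only [← Finset.sum_add_distrib, Pi.add_apply, C_add, add_mul]

theorem C_mul {c : ℝ} (hc : 0 ≤ c) (hh : Splus d h) : Splus d (C c * h) := by
  obtain ⟨a, ha, rfl⟩ := hh
  refine ⟨fun i => c * a i, fun i => mul_nonneg hc (ha i), ?_⟩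
  simp only [Finset.mul_sum, C_mul, mul_assoc]

theorem X_pow_mul_one_add_X_pow {i : ℕ} (hi : i ≤ d / 2) :
    Splus d (X ^ i * (1 + X) ^ (d - 2 * i)) := by
  refine ⟨Pi.single i 1, fun j => ?_, ?_⟩
  · by_cases hj : j = i <;> simp [hj]
  · rw [Finset.sum_eq_single_of_mem i (Finset.mem_range.2 (Nat.lt_succ_of_le hi))
      fun j _ hj => by simp [hj]]
    simp

theorem mul_of_mul_basis {e : ℕ} {p : ℝ[X]}
    (hp : ∀ i ≤ d / 2, Splus e (p * (X ^ i * (1 + X) ^ (d - 2 * i)))) (hg : Splus d g) :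
    Splus e (p * g) := by
  obtain ⟨a, ha, rfl⟩ := hg
  rw [Finset.mul_sum]
  refine Finset.sum_induction _ (Splus e) (fun _ _ => add) (zero e) fun i hi => ?_
  rw [show p * (C (a i) * X ^ i * (1 + X) ^ (d - 2 * i))
      = C (a i) * (p * (X ^ i * (1 + X) ^ (d - 2 * i))) by ring]
  exact (hp i (Nat.lt_succ_iff.1 (Finset.mem_range.1 hi))).C_mul (ha i)

theorem X_mul (hg : Splus d g) : Splus (d + 2) (X * g) := by
  refine mul_of_mul_basis (fun i hi => ?_) hg
  rw [show X * (X ^ i * (1 + X) ^ (d - 2 * i)) = X ^ (i + 1) * (1 + X) ^ (d + 2 - 2 * (i + 1)) by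
    rw [show d + 2 - 2 * (i + 1) = d - 2 * i by omega]; ring]
  exact X_pow_mul_one_add_X_pow (by omega)

theorem one_add_X_mul (hg : Splus d g) : Splus (d + 1) ((1 + X) * g) := by
  refine mul_of_mul_basis (fun i hi => ?_) hg
  rw [show (1 + X) * (X ^ i * (1 + X) ^ (d - 2 * i)) = X ^ i * (1 + X) ^ (d + 1 - 2 * i) by
    rw [show d + 1 - 2 * i = d - 2 * i + 1 by omega]; ring]
  exact X_pow_mul_one_add_X_pow (by omega)

theorem one_add_X_sq_add_C_mul_X_mul {c : ℝ} (hc : 0 ≤ c) (hg : Splus d g) :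
    Splus (d + 2) (((1 + X) ^ 2 + C c * X) * g) := by
  rw [show ((1 + X) ^ 2 + C c * X) * g = (1 + X) * ((1 + X) * g) + C c * (X * g) by ring]
  exact hg.one_add_X_mul.one_add_X_mul.add (hg.X_mul.C_mul hc)

end Splus

structure IsSplusMultiplier (k : ℕ) (p : ℝ[X]) : Prop where
  monic : p.Monic
  natDegree_le : p.natDegree ≤ k
  reflect_eq : p.reflect k = p
  mul : ∀ {m : ℕ} {g : ℝ[X]}, Splus m g → Splus (m + k) (p * g)

theorem isSplusMultiplier_X : IsSplusMultiplier 2 X :=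
  ⟨monic_X, by rw [natDegree_X]; omega, reflect_two_X, Splus.X_mul⟩

theorem isSplusMultiplier_one_add_X : IsSplusMultiplier 1 (1 + X) :=
  ⟨by monicity!, by compute_degree!, by simp [add_comm], Splus.one_add_X_mul⟩

theorem isSplusMultiplier_one_add_X_sq_add_C_mul_X {c : ℝ} (hc : 0 ≤ c) :
    IsSplusMultiplier 2 ((1 + X) ^ 2 + C c * X) := by
  refine ⟨by monicity!, by compute_degree!, ?_, Splus.one_add_X_sq_add_C_mul_X_mul hc⟩
  have h1 : (1 + X : ℝ[X]).natDegree ≤ 1 := by compute_degree!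
  rw [reflect_add, sq, reflect_mul _ _ h1 h1 (F := 1) (G := 1)]
  simp [reflect_two_X, add_comm]

def NonposRealRooted (h : ℝ[X]) : Prop :=
  ∀ z : ℂ, aeval z h = 0 → z.im = 0 ∧ z.re ≤ 0

theorem NonposRealRooted.of_dvd {g h : ℝ[X]} (hh : NonposRealRooted h) (hgh : g ∣ h) :
    NonposRealRooted g := by
  obtain ⟨q, rfl⟩ := hgh
  exact fun z hz => hh z (by rw [map_mul, hz, zero_mul])

theorem NonposRealRooted.exists_isRoot {h : ℝ[X]} (hh : NonposRealRooted h)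
    (hdeg : 0 < h.natDegree) : ∃ r ≤ 0, h.IsRoot r := by
  obtain ⟨z, hz⟩ :=
    IsAlgClosed.exists_aeval_eq_zero ℂ h (natDegree_pos_iff_degree_pos.1 hdeg).ne'
  obtain ⟨him, hre⟩ := hh z hz
  refine ⟨z.re, hre, ?_⟩
  rw [← Complex.re_add_im z, him, Complex.ofReal_zero, zero_mul, add_zero] at hz
  have : algebraMap ℝ ℂ (h.eval z.re) = 0 := by
    rw [← aeval_algebraMap_apply_eq_algebraMap_eval]; exact hz
  exact (map_eq_zero_iff _ (FaithfulSMul.algebraMap_injective ℝ ℂ)).1 this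

theorem neg_add_inv_sub_two_nonneg {r : ℝ} (hr : r < 0) : 0 ≤ -(r + r⁻¹) - 2 := by
  have := mul_inv_cancel₀ hr.ne
  nlinarith [sq_nonneg (r + 1)]

theorem exists_eq_one_add_X_sq_add_C_mul_X_mul_of_isRoot {d : ℕ} {h : ℝ[X]} (hh : h ≠ 0)
    (hdeg : h.natDegree ≤ d) (hsym : h.reflect d = h) {r : ℝ} (hr0 : r < 0) (hr1 : r ≠ -1)
    (hr : h.IsRoot r) :
    ∃ g, h = ((1 + X) ^ 2 + C (-(r + r⁻¹) - 2) * X) * g ∧ g.natDegree + 2 ≤ d := by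
  have hinv : r ≠ r⁻¹ := fun he => by
    have : r * r = 1 := by nth_rewrite 2 [he]; exact mul_inv_cancel₀ hr0.ne
    rcases mul_self_eq_one_iff.1 this with h1 | h1
    · linarith
    · exact hr1 h1
  have hq : (X - C r) * (X - C r⁻¹) = (1 + X) ^ 2 + C (-(r + r⁻¹) - 2) * X := by
    have : C r * C r⁻¹ = (1 : ℝ[X]) := by rw [← C_mul, mul_inv_cancel₀ hr0.ne, C_1]
    simp only [map_sub, map_neg, map_add, map_ofNat]
    linear_combination this
  obtain ⟨g, rfl⟩ := (isCoprime_X_sub_C_of_isUnit_sub (sub_ne_zero.2 hinv).isUnit).mul_dvd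
    (dvd_iff_isRoot.2 hr) (dvd_iff_isRoot.2 (hr.inv_of_reflect_eq hdeg hsym))
  have hg :=
    ((monic_X_sub_C r).mul (monic_X_sub_C r⁻¹)).natDegree_mul' (right_ne_zero_of_mul hh)
  rw [natDegree_mul (X_sub_C_ne_zero r) (X_sub_C_ne_zero _), natDegree_X_sub_C,
    natDegree_X_sub_C] at hg
  exact ⟨g, by rw [hq], by omega⟩

theorem exists_isSplusMultiplier_mul {d : ℕ} {h : ℝ[X]} (hh : h ≠ 0) (hdeg : h.natDegree ≤ d)
    (hsym : h.reflect d = h) (hroots : NonposRealRooted h) (hpos : 0 < h.natDegree) :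
    ∃ k p g, 0 < k ∧ IsSplusMultiplier k p ∧ h = p * g ∧ g.natDegree + k ≤ d := by
  obtain ⟨r, hr0, hr⟩ := hroots.exists_isRoot hpos
  rcases hr0.lt_or_eq with hr0 | rfl
  · by_cases hr1 : r = -1
    · subst hr1
      obtain ⟨g, rfl, hg⟩ := exists_eq_one_add_X_mul_of_isRoot_neg_one hh hdeg hr
      exact ⟨1, _, g, one_pos, isSplusMultiplier_one_add_X, rfl, hg⟩
    · obtain ⟨g, rfl, hg⟩ :=
        exists_eq_one_add_X_sq_add_C_mul_X_mul_of_isRoot hh hdeg hsym hr0 hr1 hr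
      exact ⟨2, _, g, two_pos,
        isSplusMultiplier_one_add_X_sq_add_C_mul_X (neg_add_inv_sub_two_nonneg hr0), rfl, hg⟩
  · obtain ⟨g, rfl, hg⟩ := exists_eq_X_mul_of_isRoot_zero hh hdeg hsym hr
    exact ⟨2, X, g, two_pos, isSplusMultiplier_X, rfl, hg⟩

/-- a symmetric (center `d/2`) polynomial of degree at most `d`,
with positive leading coefficient and only real non-positive zeros, lies in
the non-negative span of `t^i (1+t)^(d-2i)`, `0 ≤ i ≤ ⌊d/2⌋`. -/
theorem symmetric_real_rooted_mem_Splus (d : ℕ) (h : Polynomial ℝ)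
    (hdeg : h.natDegree ≤ d)
    (hsym : h.reflect d = h)
    (hlead : 0 < h.leadingCoeff)
    (hroots : ∀ z : ℂ, aeval z h = 0 → z.im = 0 ∧ z.re ≤ 0) :
    Splus d h := by
  induction d using Nat.strong_induction_on generalizing h with
  | _ d ih =>
  have hh : h ≠ 0 := leadingCoeff_ne_zero.1 hlead.ne'
  rcases h.natDegree.eq_zero_or_pos with h0 | hpos
  · have hlead0 : h.leadingCoeff = h.coeff 0 := by rw [leadingCoeff, h0]
    obtain rfl : d = 0 := by
      simpa [h0] using le_natDegree_of_reflect_eq hsym (hlead0 ▸ hlead.ne')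
    rw [eq_C_of_natDegree_eq_zero h0, ← hlead0]
    simpa using (Splus.X_pow_mul_one_add_X_pow (d := 0) le_rfl).C_mul hlead.le
  · obtain ⟨k, p, g, hk, hp, rfl, hg⟩ :=
      exists_isSplusMultiplier_mul hh hdeg hsym hroots hpos
    obtain ⟨m, rfl⟩ : ∃ m, d = m + k := ⟨d - k, by omega⟩
    refine hp.mul (ih m (by omega) g (by omega) ?_ ?_
      (NonposRealRooted.of_dvd hroots (dvd_mul_left g p)))
    · exact reflect_eq_self_of_mul hp.monic.ne_zero hp.natDegree_le (by omega) hp.reflect_eq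
        (by rwa [add_comm])
    · rwa [leadingCoeff_monic_mul hp.monic] at hlead
end

section
/- If a polynomial h lies in the non-negative span of the polynomials t^i(1+t)^{d-2i} for 0 ≤ i ≤ ⌊d/2⌋, then the coefficient sequence of h is unimodal: a_0 ≤ a_1 ≤ ... ≤ a_{⌊d/2⌋} ≥ ... ≥ a_d. -/
/-!
The coefficient of `t^k` in `t^m (1+t)^(d-2m)` is `C(d-2m, k-m)`: a row of Pascal's triangle
shifted so that its centre sits at `d/2`. Each such row increases up to `⌊d/2⌋` and decreases
afterwards, and non-negative combinations preserve both monotonicities.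
-/

open Polynomial

namespace Nat

theorem choose_succ_le_of_half_le_left {r n : ℕ} (h : n / 2 ≤ r) :
    n.choose (r + 1) ≤ n.choose r := by
  refine Nat.le_of_mul_le_mul_right ?_ (Nat.succ_pos r)
  rw [choose_succ_right_eq]
  exact Nat.mul_le_mul_left _ (by omega)

theorem choose_monotoneOn (n : ℕ) : MonotoneOn n.choose (Set.Iic (n / 2)) :=
  monotoneOn_of_le_succ Set.ordConnected_Iic fun _ _ _ hr =>
    choose_le_succ_of_lt_half_left hr

theorem choose_antitoneOn (n : ℕ) : AntitoneOn n.choose (Set.Ici (n / 2)) :=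
  antitoneOn_nat_Ici_of_succ_le fun _ hr => choose_succ_le_of_half_le_left hr

end Nat

theorem MonotoneOn.sum_mul_of_nonneg {ι α R : Type*} [Preorder α] [Semiring R] [PartialOrder R]
    [IsOrderedRing R] {s : Finset ι} {c : ι → R} {f : ι → α → R} {t : Set α}
    (hc : ∀ i ∈ s, 0 ≤ c i) (hf : ∀ i ∈ s, MonotoneOn (f i) t) :
    MonotoneOn (fun x => ∑ i ∈ s, c i * f i x) t :=
  fun _ hx _ hy hxy =>
    Finset.sum_le_sum fun i hi => mul_le_mul_of_nonneg_left (hf i hi hx hy hxy) (hc i hi)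

theorem AntitoneOn.sum_mul_of_nonneg {ι α R : Type*} [Preorder α] [Semiring R] [PartialOrder R]
    [IsOrderedRing R] {s : Finset ι} {c : ι → R} {f : ι → α → R} {t : Set α}
    (hc : ∀ i ∈ s, 0 ≤ c i) (hf : ∀ i ∈ s, AntitoneOn (f i) t) :
    AntitoneOn (fun x => ∑ i ∈ s, c i * f i x) t :=
  fun _ hx _ hy hxy =>
    Finset.sum_le_sum fun i hi => mul_le_mul_of_nonneg_left (hf i hi hx hy hxy) (hc i hi)

section Basis

variable {R : Type*} [Semiring R]

theorem coeff_X_pow_mul_one_add_X_pow (m n k : ℕ) :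
    ((X : R[X]) ^ m * (1 + X) ^ n).coeff k = if m ≤ k then (n.choose (k - m) : R) else 0 := by
  rw [coeff_X_pow_mul', coeff_one_add_X_pow]

variable [PartialOrder R] [IsOrderedRing R]

theorem monotoneOn_coeff_X_pow_mul_one_add_X_pow (d m : ℕ) :
    MonotoneOn (fun k => ((X : R[X]) ^ m * (1 + X) ^ (d - 2 * m)).coeff k) (Set.Iic (d / 2)) := by
  intro i hi j hj hij
  simp only [Set.mem_Iic] at hi hj
  simp only [coeff_X_pow_mul_one_add_X_pow]
  by_cases hmi : m ≤ i
  · rw [if_pos hmi, if_pos (hmi.trans hij)]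
    exact Nat.mono_cast <| Nat.choose_monotoneOn _ (Set.mem_Iic.mpr (by omega))
      (Set.mem_Iic.mpr (by omega)) (by omega)
  · rw [if_neg hmi]
    split_ifs <;> positivity

theorem antitoneOn_coeff_X_pow_mul_one_add_X_pow {d m : ℕ} (hm : m ≤ d / 2) :
    AntitoneOn (fun k => ((X : R[X]) ^ m * (1 + X) ^ (d - 2 * m)).coeff k) (Set.Ici (d / 2)) := by
  intro i hi j hj hij
  simp only [Set.mem_Ici] at hi hj
  simp only [coeff_X_pow_mul_one_add_X_pow, if_pos (hm.trans hi), if_pos (hm.trans hj)]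
  exact Nat.mono_cast <| Nat.choose_antitoneOn _ (Set.mem_Ici.mpr (by omega))
    (Set.mem_Ici.mpr (by omega)) (by omega)

end Basis

/-- a member of the non-negative span of `t^i(1+t)^{d-2i}`,
`0 ≤ i ≤ ⌊d/2⌋`, has unimodal coefficient sequence
`a_0 ≤ a_1 ≤ ... ≤ a_{⌊d/2⌋} ≥ ... ≥ a_d`. -/
theorem Splus_unimodal (d : ℕ) (h : Polynomial ℝ) (hh : Splus d h) :
    (∀ i j : ℕ, i ≤ j → j ≤ d / 2 → h.coeff i ≤ h.coeff j) ∧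
    (∀ i j : ℕ, d / 2 ≤ i → i ≤ j → j ≤ d → h.coeff j ≤ h.coeff i) := by
  obtain ⟨a, ha, rfl⟩ := hh
  set s := Finset.range (d / 2 + 1)
  have hcoeff (k : ℕ) : (∑ i ∈ s, C (a i) * X ^ i * (1 + X) ^ (d - 2 * i)).coeff k =
      ∑ i ∈ s, a i * (X ^ i * (1 + X) ^ (d - 2 * i) : ℝ[X]).coeff k := by
    simp only [finsetSum_coeff, mul_assoc, coeff_C_mul]
  have hmono : MonotoneOn (fun k => ∑ i ∈ s, a i * (X ^ i * (1 + X) ^ (d - 2 * i) : ℝ[X]).coeff k)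
      (Set.Iic (d / 2)) :=
    .sum_mul_of_nonneg (fun i _ => ha i) fun i _ => monotoneOn_coeff_X_pow_mul_one_add_X_pow d i
  have hanti : AntitoneOn (fun k => ∑ i ∈ s, a i * (X ^ i * (1 + X) ^ (d - 2 * i) : ℝ[X]).coeff k)
      (Set.Ici (d / 2)) :=
    .sum_mul_of_nonneg (fun i _ => ha i) fun i hi =>
      antitoneOn_coeff_X_pow_mul_one_add_X_pow (Nat.lt_succ_iff.mp (Finset.mem_range.mp hi))
  simp only [hcoeff]
  exact ⟨fun i j hij hj => hmono (hij.trans hj) hj hij,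
    fun i j hi hij _ => hanti hi (hi.trans hij) hij⟩
end

section
/- For a finite poset P with labeling ε: E(P) → {-1,1} of its covering relations such that P is ε-graded of rank r(ε), the order polynomial satisfies Ω(P,ε;t) = (-1)^{|P|} Ω(P,ε;-t-r(ε)). -/
/-!
When `P` is `ε`-graded, all saturated chains from a minimal element up to `x` have the same
`ε`-weight `ρ x` (extend them by one chain up to a maximal element and compare the two maximal
chains). Then `ρ` vanishes on minimal elements, equals `r` on maximal ones and grows by `ε x y`
along each cover `x ⋖ y`, so `σ ↦ σ - ρ + r` is a bijection from the `(P,ε)`-partitions with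
parts at most `n` onto the `(P,-ε)`-partitions with parts at most `n + r`. Hence
`Ω(P,ε;n) = Ω(P,-ε;n+r) = (-1)^|P| Ω(P,ε;-n-r)` by reciprocity, for all large `n`.
-/

open Polynomial

variable {P : Type*}

/-- The ε-weight of a chain `x₀ ⋖ x₁ ⋖ ⋯ ⋖ xₙ`, recorded as a list:
the sum `Σ ε(x_{i-1}, x_i)` over consecutive pairs. -/
def chainWeight (ε : P → P → ℤ) (c : List P) : ℤ :=
  ((c.zip c.tail).map fun q => ε q.1 q.2).sum

/-- A (nonempty) saturated chain of the poset `P`, as a list of elements with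
each member covered by the next. -/
def IsSatChain [PartialOrder P] (c : List P) : Prop :=
  c ≠ [] ∧ c.Chain' (· ⋖ ·)

/-- A maximal chain: a saturated chain starting at a minimal element and
ending at a maximal element. -/
def IsMaxChainL [PartialOrder P] (c : List P) : Prop :=
  IsSatChain c ∧ (∀ x ∈ c.head?, IsMin x) ∧ (∀ x ∈ c.getLast?, IsMax x)

/-- A saturated chain starting at a minimal element of `P` and ending at `x`. -/
def IsSatChainFromMinTo [PartialOrder P] (x : P) (c : List P) : Prop :=
  IsSatChain c ∧ (∀ y ∈ c.head?, IsMin y) ∧ c.getLast? = some x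

/-- `ε` takes only the values `1` and `-1` on covering relations. -/
def IsSignLabeling [PartialOrder P] (ε : P → P → ℤ) : Prop :=
  ∀ x y : P, x ⋖ y → ε x y = 1 ∨ ε x y = -1

/-- `P` is `ε`-graded of rank `r`: every maximal chain has ε-weight `r`. -/
def IsEGraded [PartialOrder P] (ε : P → P → ℤ) (r : ℤ) : Prop :=
  ∀ c : List P, IsMaxChainL c → chainWeight ε c = r

/-- A `(P,ε)`-partition: an order-reversing map `σ : P → {1,2,…}` which is
strict on covering relations labeled `-1`. -/
def IsPPartition [PartialOrder P] (ε : P → P → ℤ) (σ : P → ℤ) : Prop :=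
  (∀ x, 1 ≤ σ x) ∧ (∀ x y : P, x ≤ y → σ y ≤ σ x) ∧
  (∀ x y : P, x ⋖ y → ε x y = -1 → σ y < σ x)

/-- `Ω(P,ε;n)`: the number of `(P,ε)`-partitions with largest part at most `n`. -/
noncomputable def OmegaCount [PartialOrder P] (ε : P → P → ℤ) (n : ℕ) : ℕ :=
  Nat.card {σ : P → ℤ // IsPPartition ε σ ∧ ∀ x, σ x ≤ (n : ℤ)}

section ChainWeight

lemma chainWeight_cons_cons (ε : P → P → ℤ) (x y : P) (l : List P) :
    chainWeight ε (x :: y :: l) = ε x y + chainWeight ε (y :: l) := by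
  simp [chainWeight]

lemma chainWeight_append_cons (ε : P → P → ℤ) :
    ∀ (l : List P) (x : P) (m : List P),
      chainWeight ε (l ++ x :: m) = chainWeight ε (l ++ [x]) + chainWeight ε (x :: m)
  | [], x, m => by simp [chainWeight]
  | [a], x, m => by simp [chainWeight]
  | a :: b :: l, x, m => by
    have := chainWeight_append_cons ε (b :: l) x m
    simp only [List.cons_append, chainWeight_cons_cons] at *
    omega

lemma chainWeight_append_pair (ε : P → P → ℤ) (l : List P) (x y : P) :
    chainWeight ε (l ++ [x, y]) = chainWeight ε (l ++ [x]) + ε x y := by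
  rw [chainWeight_append_cons, chainWeight_cons_cons]
  simp [chainWeight]

end ChainWeight

variable [PartialOrder P] {ε : P → P → ℤ} {r : ℤ}

structure IsRankFunction (ε : P → P → ℤ) (r : ℤ) (ρ : P → ℤ) : Prop where
  map_covBy ⦃x y : P⦄ : x ⋖ y → ρ y = ρ x + ε x y
  map_of_isMin ⦃x : P⦄ : IsMin x → ρ x = 0
  map_of_isMax ⦃x : P⦄ : IsMax x → ρ x = r

lemma IsRankFunction.neg {ρ : P → ℤ} (hρ : IsRankFunction ε r ρ) :
    IsRankFunction (fun x y => -ε x y) (-r) (-ρ) where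
  map_covBy x y hxy := by rw [Pi.neg_apply, Pi.neg_apply, hρ.map_covBy hxy, neg_add]
  map_of_isMin x hx := by simp [hρ.map_of_isMin hx]
  map_of_isMax x hx := by simp [hρ.map_of_isMax hx]

section Chains

variable {x y : P} {a c c' d : List P}

lemma IsSatChainFromMinTo.exists_eq_append (hc : IsSatChainFromMinTo x c) : ∃ a, c = a ++ [x] :=
  List.getLast?_eq_some_iff.mp hc.2.2

lemma IsSatChainFromMinTo.append_covBy (hc : IsSatChainFromMinTo x c) (hxy : x ⋖ y) :
    IsSatChainFromMinTo y (c ++ [y]) := by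
  obtain ⟨⟨hne, hchain⟩, hmin, hlast⟩ := hc
  refine ⟨⟨by simp, hchain.append (.singleton y) ?_⟩, ?_, by simp⟩
  · simp [hlast, hxy]
  · rwa [List.head?_append_of_ne_nil _ hne]

lemma IsSatChainFromMinTo.isMaxChainL (hc : IsSatChainFromMinTo x c) (hx : IsMax x) :
    IsMaxChainL c :=
  ⟨hc.1, hc.2.1, by simp [hc.2.2, hx]⟩

lemma IsSatChainFromMinTo.isMaxChainL_append_cons (hc : IsSatChainFromMinTo x (a ++ [x]))
    (hd : IsSatChain (x :: d)) (hmax : ∀ y ∈ (x :: d).getLast?, IsMax y) :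
    IsMaxChainL (a ++ x :: d) := by
  refine ⟨⟨by simp, ?_⟩, ?_, ?_⟩
  · have h := hc.1.2.append_overlap hd.2 (List.cons_ne_nil x [])
    rwa [List.append_assoc, List.singleton_append] at h
  · simpa [List.head?_append_of_ne_nil _ hc.1.1] using hc.2.1
  · simpa [List.getLast?_append_of_ne_nil _ (List.cons_ne_nil x d)] using hmax

variable [Finite P]

lemma exists_isSatChain_cons_of_le (h : x ≤ y) :
    ∃ l, IsSatChain (x :: l) ∧ (x :: l).getLast? = some y := by
  classical
  have := Fintype.ofFinite P
  have : LocallyFiniteOrder P := Fintype.toLocallyFiniteOrder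
  obtain ⟨l, hchain, hlast⟩ :=
    List.exists_isChain_cons_of_relationReflTransGen (le_iff_reflTransGen_covBy.mp h)
  refine ⟨l, ⟨List.cons_ne_nil x l, hchain⟩, ?_⟩
  rw [List.getLast?_eq_some_getLast (List.cons_ne_nil x l), hlast]

lemma exists_isSatChainFromMinTo (x : P) : ∃ c, IsSatChainFromMinTo x c := by
  obtain ⟨m, hmx, hm⟩ := Finite.exists_le_minimal (p := fun _ => True) (a := x) trivial
  obtain ⟨l, hl, hlast⟩ := exists_isSatChain_cons_of_le hmx
  exact ⟨m :: l, hl, by simpa using hm, hlast⟩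

lemma exists_isSatChain_cons_isMax (x : P) :
    ∃ d, IsSatChain (x :: d) ∧ ∀ y ∈ (x :: d).getLast?, IsMax y := by
  obtain ⟨m, hxm, hm⟩ := Finite.exists_le_maximal (p := fun _ => True) (a := x) trivial
  obtain ⟨d, hd, hlast⟩ := exists_isSatChain_cons_of_le hxm
  exact ⟨d, hd, by simpa [hlast] using hm⟩

lemma IsEGraded.chainWeight_eq (hgr : IsEGraded ε r) (hc : IsSatChainFromMinTo x c)
    (hc' : IsSatChainFromMinTo x c') : chainWeight ε c = chainWeight ε c' := by
  obtain ⟨d, hd, hmax⟩ := exists_isSatChain_cons_isMax x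
  obtain ⟨a, rfl⟩ := hc.exists_eq_append
  obtain ⟨a', rfl⟩ := hc'.exists_eq_append
  have hw := hgr _ (hc.isMaxChainL_append_cons hd hmax)
  have hw' := hgr _ (hc'.isMaxChainL_append_cons hd hmax)
  rw [chainWeight_append_cons] at hw hw'
  omega

theorem IsEGraded.exists_isRankFunction (hgr : IsEGraded ε r) :
    ∃ ρ, IsRankFunction ε r ρ := by
  choose c hc using exists_isSatChainFromMinTo (P := P)
  refine ⟨fun x => chainWeight ε (c x), fun x y hxy => ?_, fun x hx => ?_, fun x hx => ?_⟩
  · obtain ⟨a, ha⟩ := (hc x).exists_eq_append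
    rw [hgr.chainWeight_eq (hc y) ((hc x).append_covBy hxy), ha, List.append_assoc,
      List.singleton_append, chainWeight_append_pair]
  · have hx' : IsSatChainFromMinTo x [x] :=
      ⟨⟨List.cons_ne_nil x [], .singleton x⟩, by simpa, rfl⟩
    change chainWeight ε (c x) = 0
    rw [hgr.chainWeight_eq (hc x) hx']
    simp [chainWeight]
  · exact hgr _ ((hc x).isMaxChainL hx)

end Chains

section Partitions

lemma IsSignLabeling.neg (hsign : IsSignLabeling ε) : IsSignLabeling (fun x y => -ε x y) :=
  fun x y hxy => by rcases hsign x y hxy with h | h <;> simp [h]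

lemma Finite.antitone_of_forall_covBy [Finite P] {β : Type*} [Preorder β] {f : P → β}
    (hf : ∀ x y : P, x ⋖ y → f y ≤ f x) : Antitone f := by
  classical
  have := Fintype.ofFinite P
  have : LocallyFiniteOrder P := Fintype.toLocallyFiniteOrder
  exact (antitone_iff_forall_covBy f).mpr hf

lemma IsPPartition.sub_rank_add [Finite P] {ρ σ : P → ℤ} {n : ℤ} (hsign : IsSignLabeling ε)
    (hρ : IsRankFunction ε r ρ) (hσ : IsPPartition ε σ) (hn : ∀ x, σ x ≤ n) :
    IsPPartition (fun x y => -ε x y) (fun x => σ x - ρ x + r) ∧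
      ∀ x, σ x - ρ x + r ≤ n + r := by
  obtain ⟨hpos, hanti, hstrict⟩ := hσ
  have hτ : ∀ ⦃x y⦄, x ≤ y → σ y - ρ y + r ≤ σ x - ρ x + r :=
    Finite.antitone_of_forall_covBy (f := fun x => σ x - ρ x + r) fun x y hxy => by
      have := hρ.map_covBy hxy
      have := hanti x y hxy.le
      rcases hsign x y hxy with h | h
      · omega
      · have := hstrict x y hxy h
        omega
  refine ⟨⟨fun x => ?_, fun x y hxy => hτ hxy, fun x y hxy h => ?_⟩, fun x => ?_⟩ <;>
    beta_reduce at *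
  · obtain ⟨m, hxm, hm⟩ := Finite.exists_le_maximal (p := fun _ => True) (a := x) trivial
    have := hτ hxm
    have := hρ.map_of_isMax (maximal_true.mp hm)
    have := hpos m
    omega
  · have := hρ.map_covBy hxy
    have := hanti x y hxy.le
    omega
  · obtain ⟨m, hmx, hm⟩ := Finite.exists_le_minimal (p := fun _ => True) (a := x) trivial
    have := hτ hmx
    have := hρ.map_of_isMin (minimal_true.mp hm)
    have := hn m
    omega

lemma IsEGraded.omegaCount_eq_omegaCount_neg [Finite P] (hsign : IsSignLabeling ε)
    (hgr : IsEGraded ε r) {n N : ℕ} (hN : (N : ℤ) = n + r) :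
    OmegaCount ε n = OmegaCount (fun x y => -ε x y) N := by
  obtain ⟨ρ, hρ⟩ := hgr.exists_isRankFunction
  refine Nat.card_congr
    { toFun := fun σ => ⟨fun x => σ.1 x - ρ x + r, ?_⟩
      invFun := fun τ => ⟨fun x => τ.1 x + ρ x - r, ?_⟩
      left_inv := fun σ => Subtype.ext (funext fun x => by ring)
      right_inv := fun τ => Subtype.ext (funext fun x => by ring) }
  · obtain ⟨hσ, hn⟩ := σ.2
    simpa [← hN] using hσ.sub_rank_add hsign hρ hn
  -- the inverse is the same shift for `-ε`, whose rank function is `-ρ`, of rank `-r`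
  · obtain ⟨hτ, hN'⟩ := τ.2
    simpa [hN, sub_eq_add_neg] using hτ.sub_rank_add hsign.neg hρ.neg hN'

end Partitions

theorem Polynomial.eq_of_eval_natCast_eq {R : Type*} [CommRing R] [IsDomain R] [CharZero R]
    {p q : R[X]} (N : ℕ) (h : ∀ n ≥ N, p.eval (n : R) = q.eval (n : R)) : p = q := by
  refine eq_of_infinite_eval_eq p q
    (Set.infinite_of_injective_forall_mem (f := fun k : ℕ => ((N + k : ℕ) : R)) ?_ ?_)
  · intro a b hab
    simpa using hab
  · intro k
    exact h (N + k) (Nat.le_add_right N k)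

theorem order_polynomial_symmetry_general {P : Type*} [PartialOrder P] [Fintype P]
    (ε : P → P → ℤ) (hsign : IsSignLabeling ε)
    (r : ℤ) (hgr : IsEGraded ε r)
    (Ω Ω' : Polynomial ℚ)
    (hΩ : ∀ n : ℕ, Ω.eval (n : ℚ) = OmegaCount ε n)
    (hΩ' : ∀ n : ℕ, Ω'.eval (n : ℚ) = OmegaCount (fun x y => -ε x y) n)
    (hrec : Ω' = (-1) ^ (Fintype.card P) * Ω.comp (-X)) :
    Ω = (-1) ^ (Fintype.card P) * Ω.comp (-X - C (r : ℚ)) := by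
  refine Polynomial.eq_of_eval_natCast_eq (-r).toNat fun n hn => ?_
  obtain ⟨N, hN⟩ : ∃ N : ℕ, (N : ℤ) = n + r :=
    ⟨(n + r).toNat, Int.toNat_of_nonneg (by omega)⟩
  have hNQ : (N : ℚ) = n + r := by exact_mod_cast hN
  calc Ω.eval (n : ℚ) = OmegaCount ε n := hΩ n
    _ = OmegaCount (fun x y => -ε x y) N := by rw [hgr.omegaCount_eq_omegaCount_neg hsign hN]
    _ = Ω'.eval (N : ℚ) := (hΩ' N).symm
    _ = _ := by
      rw [hrec, hNQ]
      simp [eval_comp, neg_add_eq_sub]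

/-- if `P` is `ε`-graded of rank `r(ε)` then the order polynomial
satisfies `Ω(P,ε;t) = (-1)^|P| Ω(P,ε;-t-r(ε))` (reciprocity
`Ω(P,-ε;t) = (-1)^p Ω(P,ε;-t)` is assumed as a known fact). -/
theorem order_polynomial_symmetry {P : Type*} [PartialOrder P] [Fintype P] [Nonempty P]
    (ε : P → P → ℤ) (hsign : IsSignLabeling ε)
    (r : ℤ) (hgr : IsEGraded ε r)
    (Ω Ω' : Polynomial ℚ)
    (hΩ : ∀ n : ℕ, Ω.eval (n : ℚ) = OmegaCount ε n)
    (hΩ' : ∀ n : ℕ, Ω'.eval (n : ℚ) = OmegaCount (fun x y => -ε x y) n)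
    (hrec : Ω' = (-1) ^ (Fintype.card P) * Ω.comp (-X)) :
    Ω = (-1) ^ (Fintype.card P) * Ω.comp (-X - C (r : ℚ)) :=
  order_polynomial_symmetry_general ε hsign r hgr Ω Ω' hΩ hΩ' hrec
end

section
/- The n-th Eulerian polynomial A_n(x) can be written as A_n(x) = Σ_{i=0}^{⌊(n-1)/2⌋} a_{n,i} x^i (1+x)^{n-1-2i} with non-negative integers a_{n,i}. -/
open Polynomial

/-- The number of descents of a permutation of `Fin n`: indices `i` with
`π(i) > π(i+1)`. -/
noncomputable def desNum {n : ℕ} (π : Equiv.Perm (Fin n)) : ℕ :=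
  Nat.card {i : Fin n // ∃ h : (i : ℕ) + 1 < n, π ⟨(i : ℕ) + 1, h⟩ < π i}

/-- The `n`-th Eulerian polynomial `A_n(x) = Σ_{π ∈ S_n} x^{des(π)}`. -/
noncomputable def eulerianPoly (n : ℕ) : Polynomial ℤ :=
  ∑ π : Equiv.Perm (Fin n), X ^ desNum π

/-!
Inserting the letter `n + 1` into one of the `n + 1` slots of `π ∈ S_n` keeps the number `d` of
descents in the `d + 1` slots that follow a descent or end the word, and adds one descent in the
others. Hence `A_{n+1} = (1 + n x) A_n + x (1 - x) A_n'`. The operator on the right sends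
`x^i (1 + x)^e`, with `n = 2i + e + 1`, to `(i + 1) x^i (1 + x)^(e + 1) + 2e x^(i + 1) (1 + x)^(e - 1)`,
so it maps nonnegative combinations of the `x^i (1 + x)^(n - 1 - 2i)` to nonnegative combinations
of the `x^i (1 + x)^(n - 2i)`.
-/

open Finset Equiv

section Descents

variable {n : ℕ}

def IsDescent (π : Perm (Fin n)) (i : Fin n) : Prop :=
  ∃ h : (i : ℕ) + 1 < n, π ⟨i + 1, h⟩ < π i

instance (π : Perm (Fin n)) : DecidablePred (IsDescent π) := fun _ => by
  unfold IsDescent; infer_instance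

def descents (π : Perm (Fin n)) : Finset (Fin n) := univ.filter (IsDescent π)

lemma desNum_eq_card_descents (π : Perm (Fin n)) : desNum π = #(descents π) := by
  rw [desNum, Nat.card_eq_fintype_card, Fintype.card_subtype]; rfl

lemma Fin.val_succAbove (p : Fin (n + 1)) (i : Fin n) :
    (p.succAbove i : ℕ) = if (i : ℕ) < p then (i : ℕ) else (i : ℕ) + 1 := by
  unfold Fin.succAbove
  split_ifs <;> simp_all [Fin.lt_def]

def insertMax (π : Perm (Fin n)) (p : Fin (n + 1)) : Perm (Fin (n + 1)) :=
  (finSuccEquiv' p).trans ((optionCongr π).trans (finSuccEquiv' (Fin.last n)).symm)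

@[simp] lemma insertMax_apply_self (π : Perm (Fin n)) (p : Fin (n + 1)) :
    insertMax π p p = Fin.last n := by
  simp [insertMax]

@[simp] lemma insertMax_apply_succAbove (π : Perm (Fin n)) (p : Fin (n + 1)) (i : Fin n) :
    insertMax π p (p.succAbove i) = (π i).castSucc := by
  simp [insertMax]

lemma insertMax_injective :
    Function.Injective fun x : Perm (Fin n) × Fin (n + 1) => insertMax x.1 x.2 := by
  rintro ⟨π, p⟩ ⟨π', p'⟩ h
  simp only at h
  obtain rfl : p = p' := by
    by_contra hne
    obtain ⟨i, rfl⟩ := Fin.exists_succAbove_eq hne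
    have h' := congr($h (p'.succAbove i))
    simp only [insertMax_apply_self, insertMax_apply_succAbove] at h'
    exact (Fin.castSucc_lt_last (π' i)).ne h'.symm
  obtain rfl : π = π' := by
    ext i
    simpa using congr(($h (p.succAbove i) : ℕ))
  rfl

lemma insertMax_bijective :
    Function.Bijective fun x : Perm (Fin n) × Fin (n + 1) => insertMax x.1 x.2 :=
  (Fintype.bijective_iff_injective_and_card _).mpr
    ⟨insertMax_injective, by simp [Fintype.card_perm, Nat.factorial_succ, mul_comm]⟩

lemma isDescent_insertMax_self (π : Perm (Fin n)) (p : Fin (n + 1)) :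
    IsDescent (insertMax π p) p ↔ p ≠ Fin.last n := by
  refine ⟨fun ⟨h, _⟩ => Fin.ne_of_lt (by simpa [Fin.lt_def] using h), fun hp => ?_⟩
  have hp' : (p : ℕ) < n := Fin.val_lt_last hp
  have hnext : (⟨p + 1, by omega⟩ : Fin (n + 1)) = p.succAbove ⟨p, hp'⟩ := by
    ext; simp [Fin.val_succAbove]
  refine ⟨by omega, ?_⟩
  rw [hnext, insertMax_apply_succAbove, insertMax_apply_self]
  exact Fin.castSucc_lt_last _

lemma isDescent_insertMax_succAbove (π : Perm (Fin n)) (p : Fin (n + 1)) (i : Fin n) :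
    IsDescent (insertMax π p) (p.succAbove i) ↔ IsDescent π i ∧ i.succ ≠ p := by
  by_cases hip : i.succ = p
  · subst hip
    simp only [ne_eq, not_true_eq_false, and_false, iff_false]
    rintro ⟨h, hlt⟩
    have hnext : (⟨i.succ.succAbove i + 1, h⟩ : Fin (n + 1)) = i.succ := by
      ext; simp
    rw [hnext, insertMax_apply_self] at hlt
    exact not_lt_of_ge (Fin.le_last _) hlt
  · have hip' : (i : ℕ) + 1 ≠ p := fun h => hip (Fin.ext h)
    simp only [ne_eq, hip, not_false_eq_true, and_true, IsDescent]
    have hbound : (p.succAbove i : ℕ) + 1 < n + 1 ↔ (i : ℕ) + 1 < n := by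
      rw [Fin.val_succAbove]; split_ifs <;> omega
    have hnext : ∀ h h', (⟨p.succAbove i + 1, h⟩ : Fin (n + 1)) = p.succAbove ⟨i + 1, h'⟩ := by
      intro h h'; ext; simp only [Fin.val_succAbove]; split_ifs <;> omega
    constructor
    · rintro ⟨h, hlt⟩
      refine ⟨hbound.mp h, ?_⟩
      rwa [hnext h (hbound.mp h), insertMax_apply_succAbove, insertMax_apply_succAbove,
        Fin.castSucc_lt_castSucc_iff] at hlt
    · rintro ⟨h', hlt⟩
      refine ⟨hbound.mpr h', ?_⟩
      rwa [hnext _ h', insertMax_apply_succAbove, insertMax_apply_succAbove,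
        Fin.castSucc_lt_castSucc_iff]

def descentSlots (π : Perm (Fin n)) : Finset (Fin (n + 1)) :=
  insert (Fin.last n) ((descents π).image Fin.succ)

lemma IsDescent.succ_ne_last {π : Perm (Fin n)} {i : Fin n} (h : IsDescent π i) :
    i.succ ≠ Fin.last n := by
  intro hi
  have := h.1
  rw [Fin.ext_iff, Fin.val_succ, Fin.val_last] at hi
  omega

lemma card_descentSlots (π : Perm (Fin n)) : #(descentSlots π) = desNum π + 1 := by
  rw [descentSlots, card_insert_of_notMem, card_image_of_injective _ (Fin.succ_injective n),
    desNum_eq_card_descents]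
  simp only [mem_image, not_exists, not_and]
  intro i hi
  exact (mem_filter.mp hi).2.succ_ne_last

lemma desNum_insertMax (π : Perm (Fin n)) (p : Fin (n + 1)) :
    desNum (insertMax π p) = desNum π + if p ∈ descentSlots π then 0 else 1 := by
  have hcount : desNum (insertMax π p) =
      (if p ≠ Fin.last n then 1 else 0) + #((descents π).filter (·.succ ≠ p)) := by
    simp only [desNum_eq_card_descents, descents, card_filter, Fin.sum_univ_succAbove _ p,
      isDescent_insertMax_self, isDescent_insertMax_succAbove, filter_filter]
  rw [hcount, desNum_eq_card_descents]
  by_cases hp : ∃ i ∈ descents π, i.succ = p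
  · obtain ⟨i, hi, rfl⟩ := hp
    have herase : (descents π).filter (·.succ ≠ i.succ) = (descents π).erase i := by
      ext j; simp [and_comm]
    have hslot : i.succ ∈ descentSlots π := mem_insert_of_mem (mem_image_of_mem _ hi)
    rw [herase, card_erase_of_mem hi, if_pos (mem_filter.mp hi).2.succ_ne_last, if_pos hslot]
    have := card_pos.mpr ⟨i, hi⟩
    omega
  · have hfilter : (descents π).filter (·.succ ≠ p) = descents π :=
      filter_true_of_mem fun i hi hip => hp ⟨i, hi, hip⟩
    rw [hfilter]
    rcases eq_or_ne p (Fin.last n) with rfl | hlast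
    · simp [descentSlots]
    · simp [descentSlots, hp, hlast, add_comm]

lemma desNum_le (π : Perm (Fin n)) : desNum π ≤ n := by
  simpa [desNum_eq_card_descents] using card_le_univ (descents π)

lemma sum_pow_desNum_insertMax {R : Type*} [Semiring R] (x : R) (π : Perm (Fin n)) :
    ∑ p, x ^ desNum (insertMax π p) =
      (desNum π + 1) • x ^ desNum π + (n - desNum π) • x ^ (desNum π + 1) := by
  have hterm : ∀ p, x ^ desNum (insertMax π p) =
      if p ∈ descentSlots π then x ^ desNum π else x ^ (desNum π + 1) := by
    intro p; rw [desNum_insertMax]; split_ifs <;> rfl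
  simp only [hterm, sum_ite, sum_const, filter_mem_eq_inter, filter_notMem_eq_sdiff, univ_inter,
    card_univ_sdiff, card_descentSlots, Fintype.card_fin]
  congr 2
  omega

end Descents

section EulerOperator

variable {R : Type*} [CommRing R]

variable (R) in
noncomputable def eulerOp (m : ℕ) : R[X] →ₗ[R] R[X] :=
  LinearMap.mulLeft R (1 + (m : R[X]) * X) + LinearMap.mulLeft R (X * (1 - X)) ∘ₗ derivative

lemma eulerOp_apply (m : ℕ) (f : R[X]) :
    eulerOp R m f = (1 + (m : R[X]) * X) * f + X * (1 - X) * derivative f :=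
  rfl

lemma eulerOp_X_pow {m d : ℕ} (hd : d ≤ m) :
    eulerOp R m (X ^ d) = (d + 1) • X ^ d + (m - d) • X ^ (d + 1) := by
  rw [eulerOp_apply]
  rcases d with _ | d
  · simp
  · simp only [derivative_X_pow_succ, nsmul_eq_mul, Nat.cast_sub hd, map_add, map_one,
      C_eq_natCast]
    push_cast
    ring

lemma eulerOp_X_pow_mul_one_add_X_pow (i e : ℕ) :
    eulerOp R (2 * i + e + 1) (X ^ i * (1 + X) ^ e) =
      (i + 1) • (X ^ i * (1 + X) ^ (e + 1)) + (2 * e) • (X ^ (i + 1) * (1 + X) ^ (e - 1)) := by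
  rw [eulerOp_apply]
  rcases i with _ | i <;> rcases e with _ | e <;>
    simp [derivative_mul, derivative_pow, nsmul_eq_mul] <;> ring

end EulerOperator

section GammaSpan

variable {R : Type*} [Semiring R]

variable (R) in
noncomputable def gammaSpan (d : ℕ) : AddSubmonoid R[X] :=
  AddSubmonoid.closure {f | ∃ i, 2 * i ≤ d ∧ f = X ^ i * (1 + X) ^ (d - 2 * i)}

lemma X_pow_mul_one_add_X_pow_mem_gammaSpan {d i e : ℕ} (h : 2 * i + e = d) :
    X ^ i * (1 + X) ^ e ∈ gammaSpan R d :=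
  AddSubmonoid.subset_closure ⟨i, by omega, by rw [← h, Nat.add_sub_cancel_left]⟩

lemma one_mem_gammaSpan_zero : (1 : R[X]) ∈ gammaSpan R 0 := by
  simpa using X_pow_mul_one_add_X_pow_mem_gammaSpan (R := R) (i := 0) (e := 0) rfl

lemma exists_eq_sum_of_mem_gammaSpan {d : ℕ} {f : R[X]} (hf : f ∈ gammaSpan R d) :
    ∃ a : ℕ → ℕ, f = ∑ i ∈ range (d / 2 + 1), C (a i : R) * X ^ i * (1 + X) ^ (d - 2 * i) := by
  induction hf using AddSubmonoid.closure_induction with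
  | mem f hf =>
    obtain ⟨i, hi, rfl⟩ := hf
    refine ⟨Pi.single i 1, ?_⟩
    rw [sum_eq_single_of_mem i (mem_range.mpr (by omega)) fun j _ hj => by simp [hj]]
    simp
  | zero => exact ⟨0, by simp⟩
  | add f g _ _ hf hg =>
    obtain ⟨a, rfl⟩ := hf
    obtain ⟨b, rfl⟩ := hg
    exact ⟨a + b, by simp [add_mul, sum_add_distrib]⟩

end GammaSpan

lemma eulerOp_mem_gammaSpan {R : Type*} [CommRing R] {d : ℕ} {f : R[X]}
    (hf : f ∈ gammaSpan R d) : eulerOp R (d + 1) f ∈ gammaSpan R (d + 1) := by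
  induction hf using AddSubmonoid.closure_induction with
  | mem f hf =>
    obtain ⟨i, hi, rfl⟩ := hf
    obtain ⟨e, rfl⟩ : ∃ e, d = 2 * i + e := ⟨d - 2 * i, by omega⟩
    rw [Nat.add_sub_cancel_left, eulerOp_X_pow_mul_one_add_X_pow]
    refine add_mem (nsmul_mem (X_pow_mul_one_add_X_pow_mem_gammaSpan (by ring)) _) ?_
    rcases e with _ | e
    · simp
    · exact nsmul_mem (X_pow_mul_one_add_X_pow_mem_gammaSpan (by omega)) _
  | zero => rw [map_zero]; exact zero_mem _
  | add f g _ _ hf hg => rw [map_add]; exact add_mem hf hg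

lemma eulerianPoly_succ (n : ℕ) : eulerianPoly (n + 1) = eulerOp ℤ n (eulerianPoly n) := by
  rw [eulerianPoly, ← insertMax_bijective.sum_comp (fun σ => X ^ desNum σ), Fintype.sum_prod_type,
    eulerianPoly, map_sum]
  refine sum_congr rfl fun π _ => ?_
  rw [sum_pow_desNum_insertMax, eulerOp_X_pow (desNum_le π)]

lemma eulerianPoly_zero : eulerianPoly 0 = 1 := by
  simp [eulerianPoly, desNum_eq_card_descents, descents]

lemma eulerianPoly_mem_gammaSpan (n : ℕ) : eulerianPoly n ∈ gammaSpan ℤ (n - 1) := by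
  induction n with
  | zero => simpa [eulerianPoly_zero] using one_mem_gammaSpan_zero
  | succ n ih =>
    rw [eulerianPoly_succ]
    rcases n with _ | n
    · simpa [eulerianPoly_zero, eulerOp_apply] using one_mem_gammaSpan_zero
    · exact eulerOp_mem_gammaSpan ih

theorem eulerian_gamma_expansion_general (n : ℕ) :
    ∃ a : ℕ → ℕ, eulerianPoly n =
      ∑ i ∈ Finset.range ((n - 1) / 2 + 1),
        C (a i : ℤ) * X ^ i * (1 + X) ^ (n - 1 - 2 * i) :=
  exists_eq_sum_of_mem_gammaSpan (eulerianPoly_mem_gammaSpan n)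

/-- the Eulerian polynomial can be written as
`A_n(x) = Σ_{i=0}^{⌊(n-1)/2⌋} a_{n,i} x^i (1+x)^{n-1-2i}` with non-negative
integers `a_{n,i}`. -/
theorem eulerian_gamma_expansion (n : ℕ) (hn : 1 ≤ n) :
    ∃ a : ℕ → ℕ, eulerianPoly n =
      ∑ i ∈ Finset.range ((n - 1) / 2 + 1),
        C (a i : ℤ) * X ^ i * (1 + X) ^ (n - 1 - 2 * i) :=
  eulerian_gamma_expansion_general n
end
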